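/- arXiv:2208.01560 — 4 statements merged into one kernel-verified Lean document; each statement's English description precedes it below -/
import Mathlib

section
/- A tuple Φ = (φ₁,…,φ_m) of pairwise commuting maps X → X is a triangular system for (X, cl) if and only if for each i ∈ {1,…,m} and all finite A ⊆ X and all B ⊆ X: rk(φᵢ(A) | φ₁(A∪B) ∪ ⋯ ∪ φ_{i−1}(A∪B) ∪ φᵢ(B)) ≤ rk(A|B). -/
open Set

/-- A finitary matroid (pregeometry): a closure operator satisfying monotonicity,
idempotence, finite character and Steinitz exchange. -/
structure FinMatroid (X : Type*) where
  cl : Set X → Set X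
  subset_cl : ∀ A : Set X, A ⊆ cl A
  cl_mono : ∀ ⦃A B : Set X⦄, A ⊆ B → cl A ⊆ cl B
  cl_idem : ∀ A : Set X, cl (cl A) = cl A
  cl_finChar : ∀ (A : Set X) (a : X), a ∈ cl A → ∃ A₀ ⊆ A, A₀.Finite ∧ a ∈ cl A₀
  cl_exchange : ∀ (a b : X) (A : Set X), a ∈ cl (A ∪ {b}) → a ∉ cl A → b ∈ cl (A ∪ {a})

namespace FinMatroid

variable {X : Type*}

/-- `B` is `cl`-independent over `A`. -/
def Indep (M : FinMatroid X) (A B : Set X) : Prop :=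
  ∀ b ∈ B, b ∉ M.cl (A ∪ (B \ {b}))

/-- `B₀` is a basis for `B` over `A`. -/
def IsBasisOver (M : FinMatroid X) (A B B₀ : Set X) : Prop :=
  B₀ ⊆ B ∧ M.Indep A B₀ ∧ B ⊆ M.cl (A ∪ B₀)

/-- The rank `rk(B|A)`: the common cardinality of bases of `B` over `A`. -/
noncomputable def rk (M : FinMatroid X) (B A : Set X) : ℕ :=
  sInf {n : ℕ | ∃ B₀ : Set X, M.IsBasisOver A B B₀ ∧ B₀.ncard = n}

end FinMatroid

/-- `ψ` is a triangular system for the finitary matroid `M`. -/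
def Triangular {X : Type*} (M : FinMatroid X) {n : ℕ} (ψ : Fin n → X → X) : Prop :=
  ∀ (i : Fin n) (a : X) (B : Set X), a ∈ M.cl B →
    ψ i a ∈ M.cl (⋃ j ∈ Finset.Iic i, (ψ j) '' B)

/-- `ψ` is quasi-triangular: the system augmented by the identity map is triangular. -/
def QuasiTriangular {X : Type*} (M : FinMatroid X) {n : ℕ} (ψ : Fin n → X → X) : Prop :=
  Triangular M (Fin.cons id ψ)

/-- The composite operator `φ^r̄ = φ₁^{r₁} ∘ ⋯ ∘ φ_m^{r_m}` (operators indexed by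
pairs `(i, j)` with `i : Fin k`, `j : Fin (d i)`). -/
def opPow {X : Type*} {k : ℕ} {d : Fin k → ℕ} (φ : ∀ i : Fin k, Fin (d i) → X → X)
    (r : ∀ i : Fin k, Fin (d i) → ℕ) : X → X :=
  (List.finRange k).foldr
    (fun i f => ((List.finRange (d i)).foldr (fun j g => (φ i j)^[r i j] ∘ g) id) ∘ f) id

/-- The operators pairwise commute. -/
def Commuting {X : Type*} {k : ℕ} {d : Fin k → ℕ}
    (φ : ∀ i : Fin k, Fin (d i) → X → X) : Prop :=
  ∀ i j i' j', Function.Commute (φ i j) (φ i' j')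

/-- `Φ^{(s̄)}(A)`: images of elements of `A` under all `φ^r̄` with `‖r̄‖ = s̄`. -/
def PhiEq {X : Type*} {k : ℕ} {d : Fin k → ℕ} (φ : ∀ i : Fin k, Fin (d i) → X → X)
    (s : Fin k → ℕ) (A : Set X) : Set X :=
  {x | ∃ r : ∀ i : Fin k, Fin (d i) → ℕ,
    (∀ i, ∑ j, r i j = s i) ∧ ∃ a ∈ A, x = opPow φ r a}

/-- `Φ^{≼(s̄)}(A)`: images of elements of `A` under all `φ^r̄` with `‖r̄‖ ≼ s̄`. -/
def PhiLe {X : Type*} {k : ℕ} {d : Fin k → ℕ} (φ : ∀ i : Fin k, Fin (d i) → X → X)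
    (s : Fin k → ℕ) (A : Set X) : Set X :=
  {x | ∃ r : ∀ i : Fin k, Fin (d i) → ℕ,
    (∀ i, ∑ j, r i j ≤ s i) ∧ ∃ a ∈ A, x = opPow φ r a}

/-- `|Φ^{(s̄)}|`: the number of `r̄ ∈ ℕ^m` with `‖r̄‖ = s̄`. -/
noncomputable def cntEq {k : ℕ} (d : Fin k → ℕ) (s : Fin k → ℕ) : ℕ :=
  Nat.card {r : ∀ i : Fin k, Fin (d i) → ℕ // ∀ i, ∑ j, r i j = s i}

/-- `|Φ^{≼(s̄)}|`: the number of `r̄ ∈ ℕ^m` with `‖r̄‖ ≼ s̄`. -/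
noncomputable def cntLe {k : ℕ} (d : Fin k → ℕ) (s : Fin k → ℕ) : ℕ :=
  Nat.card {r : ∀ i : Fin k, Fin (d i) → ℕ // ∀ i, ∑ j, r i j ≤ s i}

/-- `Θ(A)`: images of elements of `A` under all the operators `φ^r̄`, `r̄ ∈ ℕ^m`. -/
def Theta {X : Type*} {k : ℕ} {d : Fin k → ℕ} (φ : ∀ i : Fin k, Fin (d i) → X → X)
    (A : Set X) : Set X :=
  {x | ∃ r : ∀ i : Fin k, Fin (d i) → ℕ, ∃ a ∈ A, x = opPow φ r a}

/-- The `Φ`-closure operator. -/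
noncomputable def clPhi {X : Type*} {k : ℕ} {d : Fin k → ℕ} (M : FinMatroid X)
    (φ : ∀ i : Fin k, Fin (d i) → X → X) (B : Set X) : Set X :=
  {a | ∃ s : Fin k → ℕ, M.rk (PhiEq φ s {a}) (PhiEq φ s B) < cntEq d s}

/-- The `Φ*`-closure operator. -/
noncomputable def clPhiStar {X : Type*} {k : ℕ} {d : Fin k → ℕ} (M : FinMatroid X)
    (φ : ∀ i : Fin k, Fin (d i) → X → X) (B : Set X) : Set X :=
  {a | ∃ s : Fin k → ℕ, M.rk (PhiLe φ s {a}) (PhiLe φ s B) < cntLe d s}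

/-- View a function `Fin k → ℕ` as a monomial exponent. -/
noncomputable def expOf {k : ℕ} (e : Fin k → ℕ) : Fin k →₀ ℕ :=
  Finsupp.equivFunOnFinite.symm e

/-!
If `Φ` is triangular and `A₀` is a basis of `A` over `B`, then every `a ∈ A` lies in
`cl(B ∪ A₀)`, so `φᵢ(a)` lies in the closure of `φ_{≤i}(B ∪ A₀)`, which is contained in the
base set of the rank inequality together with `φᵢ(A₀)`; hence `φᵢ(A)` has rank at most `|A₀|`
over that base. Conversely, for `a ∈ cl B` the inequality with `A = {a}` has right-hand side
`0`, which puts `φᵢ(a)` into the closure of `φ_{<i}(a) ∪ φ_{<i}(B) ∪ φᵢ(B)`; by induction on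
`i` the elements `φⱼ(a)` with `j < i` already lie in `cl(φ_{≤i}(B))`.
-/

namespace FinMatroid

variable {X : Type*} (M : FinMatroid X)

lemma cl_subset_cl_of_subset_cl {A B : Set X} (h : A ⊆ M.cl B) : M.cl A ⊆ M.cl B :=
  M.cl_idem B ▸ M.cl_mono h

lemma union_subset_cl_of_mem_cl_diff {C S : Set X} {b : X} (hb : b ∈ M.cl (C ∪ (S \ {b}))) :
    C ∪ S ⊆ M.cl (C ∪ (S \ {b})) := by
  refine (union_subset_union_right C (subset_insert_sdiff_singleton b S)).trans ?_
  rw [union_insert]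
  exact insert_subset hb (M.subset_cl _)

/-- A spanning set of least cardinality is independent. -/
lemma exists_isBasisOver_ncard_le {C T S : Set X} (hS : S.Finite) (hST : S ⊆ T)
    (hTS : T ⊆ M.cl (C ∪ S)) : ∃ S₀, M.IsBasisOver C T S₀ ∧ S₀.ncard ≤ S.ncard := by
  let Spanning : Set X → Prop := fun S₀ => S₀.Finite ∧ S₀ ⊆ T ∧ T ⊆ M.cl (C ∪ S₀)
  obtain ⟨S₀, ⟨hS₀, hS₀T, hTS₀⟩, hmin⟩ :=
    exists_minimalFor_of_wellFoundedLT Spanning ncard ⟨S, hS, hST, hTS⟩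
  refine ⟨S₀, ⟨hS₀T, fun b hbS₀ hb => ?_, hTS₀⟩,
    (le_total _ _).elim id (hmin ⟨hS, hST, hTS⟩)⟩
  have hspan : Spanning (S₀ \ {b}) :=
    ⟨hS₀.sdiff, sdiff_subset.trans hS₀T,
      hTS₀.trans (M.cl_subset_cl_of_subset_cl (M.union_subset_cl_of_mem_cl_diff hb))⟩
  have hlt := ncard_sdiff_singleton_lt_of_mem hbS₀ hS₀
  exact hlt.not_ge (hmin hspan hlt.le)

lemma rk_le_ncard_of_subset_cl {C T S : Set X} (hS : S.Finite) (hST : S ⊆ T)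
    (hTS : T ⊆ M.cl (C ∪ S)) : M.rk T C ≤ S.ncard := by
  obtain ⟨S₀, hbasis, hcard⟩ := M.exists_isBasisOver_ncard_le hS hST hTS
  exact (Nat.sInf_le (s := {n | ∃ B₀, M.IsBasisOver C T B₀ ∧ B₀.ncard = n})
    ⟨S₀, hbasis, rfl⟩).trans hcard

lemma exists_isBasisOver_ncard_eq_rk (C : Set X) {T : Set X} (hT : T.Finite) :
    ∃ T₀, M.IsBasisOver C T T₀ ∧ T₀.ncard = M.rk T C := by
  obtain ⟨T₀, hbasis, -⟩ :=
    M.exists_isBasisOver_ncard_le hT subset_rfl (subset_union_right.trans (M.subset_cl _))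
  exact Nat.sInf_mem (s := {n | ∃ B₀, M.IsBasisOver C T B₀ ∧ B₀.ncard = n})
    ⟨T₀.ncard, T₀, hbasis, rfl⟩

lemma rk_eq_zero_iff {C T : Set X} (hT : T.Finite) : M.rk T C = 0 ↔ T ⊆ M.cl C := by
  constructor
  · intro h
    obtain ⟨T₀, ⟨hT₀T, -, hTT₀⟩, hcard⟩ := M.exists_isBasisOver_ncard_eq_rk C hT
    rw [h, ncard_eq_zero (hT.subset hT₀T)] at hcard
    rwa [hcard, union_empty] at hTT₀
  · intro h
    simpa using M.rk_le_ncard_of_subset_cl finite_empty (empty_subset T) (by rwa [union_empty])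

end FinMatroid

lemma Finset.set_biUnion_Iic {α ι : Type*} [LinearOrder ι] [LocallyFiniteOrderBot ι]
    (f : ι → Set α) (i : ι) :
    ⋃ j ∈ Finset.Iic i, f j = (⋃ j ∈ Finset.Iio i, f j) ∪ f i := by
  rw [← Finset.Iio_insert, Finset.set_biUnion_insert, Set.union_comm]

section Triangular

variable {X : Type*} {M : FinMatroid X} {m : ℕ} {φ : Fin m → X → X}

lemma Triangular.rk_image_le (hφ : Triangular M φ) (i : Fin m) {A : Set X} (B : Set X)
    (hA : A.Finite) :
    M.rk ((φ i) '' A) ((⋃ j ∈ Finset.Iio i, (φ j) '' (A ∪ B)) ∪ (φ i) '' B) ≤ M.rk A B := by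
  obtain ⟨A₀, ⟨hA₀A, -, hAA₀⟩, hcard⟩ := M.exists_isBasisOver_ncard_eq_rk B hA
  have hA₀ : A₀.Finite := hA.subset hA₀A
  have hspan : ⋃ j ∈ Finset.Iic i, (φ j) '' (B ∪ A₀) ⊆
      ((⋃ j ∈ Finset.Iio i, (φ j) '' (A ∪ B)) ∪ (φ i) '' B) ∪ (φ i) '' A₀ := by
    rw [Finset.set_biUnion_Iic, image_union, ← union_assoc]
    refine union_subset_union_left _ (union_subset_union_left _ ?_)
    exact iUnion₂_mono fun j _ =>
      image_mono (union_subset subset_union_right (hA₀A.trans subset_union_left))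
  calc _ ≤ ((φ i) '' A₀).ncard := by
        refine M.rk_le_ncard_of_subset_cl (hA₀.image _) (image_mono hA₀A) ?_
        rintro _ ⟨a, ha, rfl⟩
        exact M.cl_mono hspan (hφ i a _ (hAA₀ ha))
    _ ≤ A₀.ncard := ncard_image_le hA₀
    _ = M.rk A B := hcard

lemma triangular_of_rk_image_le
    (h : ∀ (i : Fin m) (A B : Set X), A.Finite →
      M.rk ((φ i) '' A) ((⋃ j ∈ Finset.Iio i, (φ j) '' (A ∪ B)) ∪ (φ i) '' B) ≤ M.rk A B) :
    Triangular M φ := by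
  intro i
  induction i using WellFoundedLT.induction with
  | _ i ih =>
  intro a B haB
  set D := ⋃ j ∈ Finset.Iic i, (φ j) '' B
  have hC : (⋃ j ∈ Finset.Iio i, (φ j) '' ({a} ∪ B)) ∪ (φ i) '' B ⊆ M.cl D := by
    refine union_subset (iUnion₂_subset fun j hj => ?_) ?_
    · rw [Finset.mem_Iio] at hj
      rw [image_union, image_singleton, singleton_union]
      refine insert_subset ?_ ?_
      · refine M.cl_mono ?_ (ih j hj a B haB)
        exact biUnion_subset_biUnion_left (Finset.coe_subset.2 (Finset.Iic_subset_Iic.2 hj.le))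
      · exact (subset_biUnion_of_mem (u := fun j => (φ j) '' B)
          (Finset.mem_coe.2 (Finset.mem_Iic.2 hj.le))).trans (M.subset_cl D)
    · exact (subset_biUnion_of_mem (u := fun j => (φ j) '' B)
        (Finset.mem_coe.2 (Finset.mem_Iic.2 le_rfl))).trans (M.subset_cl D)
  have ha : M.rk {a} B = 0 := (M.rk_eq_zero_iff (finite_singleton a)).2 (singleton_subset_iff.2 haB)
  have hφa := (M.rk_eq_zero_iff ((finite_singleton a).image (φ i))).1
    (Nat.eq_zero_of_le_zero (ha ▸ h i {a} B (finite_singleton a)))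
  rw [image_singleton, singleton_subset_iff] at hφa
  exact M.cl_subset_cl_of_subset_cl hC hφa

end Triangular

theorem statement5_general {X : Type*} (M : FinMatroid X) {m : ℕ} (φ : Fin m → X → X) :
    Triangular M φ ↔
      ∀ (i : Fin m) (A B : Set X), A.Finite →
        M.rk ((φ i) '' A)
          ((⋃ j ∈ Finset.Iio i, (φ j) '' (A ∪ B)) ∪ (φ i) '' B) ≤ M.rk A B :=
  ⟨fun hφ i _ B hA => hφ.rk_image_le i B hA, triangular_of_rk_image_le⟩

/-- **Lemma 1.1.** A tuple `Φ = (φ₁,…,φ_m)` of pairwise commuting maps is a triangular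
system if and only if for each `i` and all finite `A ⊆ X` and all `B ⊆ X` one has
`rk(φᵢ(A) | φ₁(A∪B) ∪ ⋯ ∪ φ_{i-1}(A∪B) ∪ φᵢ(B)) ≤ rk(A|B)`. -/
theorem statement5 {X : Type*} (M : FinMatroid X) {m : ℕ} (φ : Fin m → X → X)
    (hcomm : ∀ i j, Function.Commute (φ i) (φ j)) :
    Triangular M φ ↔
      ∀ (i : Fin m) (A B : Set X), A.Finite →
        M.rk ((φ i) '' A)
          ((⋃ j ∈ Finset.Iio i, (φ j) '' (A ∪ B)) ∪ (φ i) '' B) ≤ M.rk A B :=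
  statement5_general M φ
end

section
/- Let d₁,…,d_k ≥ 1 and let f : ℕ^k → ℕ. Suppose that (1−Y₁)^{d₁}⋯(1−Y_k)^{d_k} · G_f(Ȳ) = R(Ȳ) in ℚ[[Y₁,…,Y_k]] for some polynomial R ∈ ℚ[Y₁,…,Y_k] of degree at most m̄ = (m₁,…,m_k). Then there is a polynomial P ∈ ℚ[Y₁,…,Y_k] of degree at most (d₁−1,…,d_k−1) such that f(s̄) = P(s̄) for all s̄ ∈ ℕ^k with s̄ ≽ m̄, and the coefficient of Y₁^{d₁−1}⋯Y_k^{d_k−1} in P equals R(1,…,1) / ((d₁−1)!⋯(d_k−1)!). -/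
/-!
Multiplying by `(1 - Y₁)^{-d₁} ⋯ (1 - Y_k)^{-d_k} = Σ_n ∏ᵢ C(dᵢ - 1 + nᵢ, dᵢ - 1) Ȳⁿ` gives
`f(s̄) = Σ_ū R_ū ∏ᵢ C(dᵢ - 1 + sᵢ - uᵢ, dᵢ - 1)`, the sum running over the monomials `Ȳ^ū` of `R`.
Once `s̄ ≽ m̄ ≽ ū`, each factor is the value at `sᵢ` of a polynomial of degree `dᵢ - 1` with
leading coefficient `1 / (dᵢ - 1)!`, so the sum is a polynomial in `s̄` whose top coefficient is
`Σ_ū R_ū / ∏ᵢ (dᵢ - 1)! = R(1, …, 1) / ∏ᵢ (dᵢ - 1)!`.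
-/

/-- The generating function `G_f(Ȳ) = Σ_{s̄} f(s̄) Ȳ^{s̄}` of `f : ℕ^k → ℕ`,
as a multivariate formal power series with rational coefficients. -/
noncomputable def genFun {k : ℕ} (f : (Fin k → ℕ) → ℕ) : MvPowerSeries (Fin k) ℚ :=
  fun e => (f (fun i => e i) : ℚ)

namespace Polynomial

variable {K : Type*} [Field K]

noncomputable def shiftedChoose (r a : ℕ) : K[X] :=
  C (r.factorial : K)⁻¹ * (descPochhammer K r).comp (X + C ((r : K) - a))

theorem natDegree_descPochhammer_comp_X_add_C (r : ℕ) (c : K) :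
    ((descPochhammer K r).comp (X + C c)).natDegree = r := by
  rw [natDegree_comp, descPochhammer_natDegree, natDegree_X_add_C, mul_one]

theorem natDegree_shiftedChoose_le (r a : ℕ) : (shiftedChoose r a : K[X]).natDegree ≤ r :=
  (natDegree_C_mul_le _ _).trans (natDegree_descPochhammer_comp_X_add_C r _).le

theorem coeff_shiftedChoose_self (r a : ℕ) :
    (shiftedChoose r a : K[X]).coeff r = (r.factorial : K)⁻¹ := by
  have htop := ((monic_descPochhammer K r).comp_X_add_C ((r : K) - a)).coeff_natDegree
  rw [natDegree_descPochhammer_comp_X_add_C] at htop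
  rw [shiftedChoose, coeff_C_mul, htop, mul_one]

theorem eval_shiftedChoose [CharZero K] (r : ℕ) {a s : ℕ} (h : a ≤ s) :
    (shiftedChoose r a : K[X]).eval (s : K) = ((r + (s - a)).choose r : K) := by
  have hpoint : (s : K) + ((r : K) - a) = ((r + (s - a) : ℕ) : K) := by
    push_cast [Nat.cast_sub h]
    ring
  rw [shiftedChoose, eval_mul, eval_C, eval_comp, eval_add, eval_X, eval_C, hpoint,
    descPochhammer_eval_eq_descFactorial, Nat.descFactorial_eq_factorial_mul_choose, Nat.cast_mul,
    inv_mul_cancel_left₀ (by exact_mod_cast r.factorial_ne_zero)]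

end Polynomial

namespace MvPowerSeries

variable {σ R : Type*} [CommRing R]

theorem coeff_coe_mul_of_support_le (p : MvPolynomial σ R) (F : MvPowerSeries σ R)
    (n : σ →₀ ℕ) (hp : ∀ u ∈ p.support, u ≤ n) :
    coeff n ((p : MvPowerSeries σ R) * F) = ∑ u ∈ p.support, p.coeff u * coeff (n - u) F := by
  conv_lhs => rw [p.as_sum, ← MvPolynomial.coeToMvPowerSeries.ringHom_apply, map_sum]
  rw [Finset.sum_mul, map_sum]
  refine Finset.sum_congr rfl fun u hu => ?_
  rw [MvPolynomial.coeToMvPowerSeries.ringHom_apply, MvPolynomial.coe_monomial,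
    coeff_monomial_mul, if_pos (hp u hu)]

variable [Fintype σ]

theorem prod_one_sub_X_pow_mul_prod_subst_invOneSubPow (d : σ → ℕ) :
    (∏ i, (1 - X i : MvPowerSeries σ R) ^ d i) *
      ∏ i, (PowerSeries.invOneSubPow R (d i)).val.subst (X i : MvPowerSeries σ R) = 1 := by
  rw [← Finset.prod_mul_distrib]
  refine Finset.prod_eq_one fun i _ => ?_
  have hX := PowerSeries.HasSubst.X (S := R) i
  have hpow : (1 - X i : MvPowerSeries σ R) ^ d i
      = PowerSeries.substAlgHom hX (PowerSeries.invOneSubPow R (d i)).inv := by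
    rw [PowerSeries.invOneSubPow_inv_eq_one_sub_pow, map_pow, map_sub, map_one,
      PowerSeries.substAlgHom_X]
  rw [hpow, ← PowerSeries.coe_substAlgHom hX, ← map_mul, Units.inv_val, map_one]

theorem coeff_prod_subst_X [DecidableEq σ] (g : σ → PowerSeries R) (n : σ →₀ ℕ) :
    coeff n (∏ i, (g i).subst (X i : MvPowerSeries σ R))
      = ∏ i, PowerSeries.coeff (n i) (g i) := by
  simp_rw [coeff_prod, PowerSeries.coeff_subst_single]
  -- Only the splitting of `n` into its coordinate monomials `single i (n i)` survives.
  let l₀ : σ →₀ σ →₀ ℕ := Finsupp.equivFunOnFinite.symm fun i => Finsupp.single i (n i)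
  rw [Finset.sum_eq_single l₀]
  · simp [l₀]
  · intro l hl hne
    rw [Finset.mem_finsuppAntidiag] at hl
    contrapose! hne
    have hsingle : ∀ i, l i = Finsupp.single i (l i i) := fun i => by
      by_contra h
      exact hne (Finset.prod_eq_zero (Finset.mem_univ i) (if_neg h))
    have hdiag : ∀ i, l i i = n i := fun i => by
      rw [← hl.1, Finset.sum_apply', Finset.sum_eq_single i]
      · intro j _ hji
        rw [hsingle j, Finsupp.single_eq_of_ne' hji]
      · simp
    ext i : 1
    simp [l₀, ← hdiag, ← hsingle]
  · simp [l₀, Finset.mem_finsuppAntidiag, Finsupp.univ_sum_single]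

end MvPowerSeries

namespace MvPolynomial

variable {σ R : Type*} [CommRing R]

theorem eval_aeval_X (g : σ → R) (i : σ) (q : Polynomial R) :
    eval g (Polynomial.aeval (X i) q) = q.eval (g i) := by
  have h := Polynomial.aeval_algHom_apply (aeval g) (X i) q
  rw [aeval_X, Polynomial.coe_aeval_eq_eval] at h
  exact h.symm

variable [Fintype σ]

theorem coeff_prod_aeval_X [DecidableEq σ] (q : σ → Polynomial R) (n : σ →₀ ℕ) :
    coeff n (∏ i, Polynomial.aeval (X i) (q i)) = ∏ i, (q i).coeff (n i) := by
  have hcoe : ∀ i, ((Polynomial.aeval (X i) (q i) : MvPolynomial σ R) : MvPowerSeries σ R)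
      = (q i : PowerSeries R).subst (MvPowerSeries.X i : MvPowerSeries σ R) := fun i => by
    have h := Polynomial.aeval_algHom_apply (coeToMvPowerSeries.algHom R) (X i) (q i)
    simp only [coeToMvPowerSeries.algHom_apply, Algebra.algebraMap_self, MvPowerSeries.map_id,
      RingHom.id_apply, coe_X] at h
    rw [PowerSeries.subst_coe (PowerSeries.HasSubst.X i), ← h]
  rw [← coeff_coe, ← coeToMvPowerSeries.ringHom_apply, map_prod]
  simp only [coeToMvPowerSeries.ringHom_apply, hcoe, MvPowerSeries.coeff_prod_subst_X,
    Polynomial.coeff_coe]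

variable {K : Type*} [Field K]

noncomputable def chooseInterpolant (p : MvPolynomial σ K) (r : σ → ℕ) : MvPolynomial σ K :=
  ∑ u ∈ p.support,
    C (p.coeff u) * ∏ i, Polynomial.aeval (X i) (Polynomial.shiftedChoose (K := K) (r i) (u i))

variable (p : MvPolynomial σ K) (r : σ → ℕ)

theorem eval_chooseInterpolant [CharZero K] (s : σ → ℕ) (hs : ∀ u ∈ p.support, ∀ i, u i ≤ s i) :
    eval (fun i => (s i : K)) (chooseInterpolant p r)
      = ∑ u ∈ p.support, p.coeff u * ∏ i, ((r i + (s i - u i)).choose (r i) : K) := by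
  simp only [chooseInterpolant, map_sum, map_mul, eval_C, map_prod]
  refine Finset.sum_congr rfl fun u hu => congrArg _ (Finset.prod_congr rfl fun i _ => ?_)
  rw [eval_aeval_X, Polynomial.eval_shiftedChoose _ (hs u hu i)]

variable [DecidableEq σ]

theorem coeff_chooseInterpolant (m : σ →₀ ℕ) :
    coeff m (chooseInterpolant p r)
      = ∑ u ∈ p.support, p.coeff u * ∏ i, (Polynomial.shiftedChoose (r i) (u i)).coeff (m i) := by
  simp only [chooseInterpolant, coeff_sum, coeff_C_mul, coeff_prod_aeval_X]

theorem degreeOf_chooseInterpolant_le (i : σ) : degreeOf i (chooseInterpolant p r) ≤ r i := by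
  refine degreeOf_le_iff.mpr fun m hm => ?_
  by_contra! hlt
  refine mem_support_iff.mp hm ?_
  rw [coeff_chooseInterpolant]
  refine Finset.sum_eq_zero fun u _ => ?_
  rw [Finset.prod_eq_zero (Finset.mem_univ i) (Polynomial.coeff_eq_zero_of_natDegree_lt
    ((Polynomial.natDegree_shiftedChoose_le _ _).trans_lt hlt)), mul_zero]

theorem coeff_chooseInterpolant_top :
    coeff (Finsupp.equivFunOnFinite.symm r) (chooseInterpolant p r)
      = eval (fun _ => 1) p / ∏ i, ((r i).factorial : K) := by
  simp only [coeff_chooseInterpolant, Finsupp.equivFunOnFinite_symm_apply_apply,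
    Polynomial.coeff_shiftedChoose_self, Finset.prod_inv_distrib, ← Finset.sum_mul, eval_eq,
    one_pow, Finset.prod_const_one, mul_one, div_eq_mul_inv]

end MvPolynomial

theorem coeff_genFun_eq_sum_choose {k : ℕ} (f : (Fin k → ℕ) → ℕ) (d : Fin k → ℕ)
    (hd : ∀ i, 1 ≤ d i) (R : MvPolynomial (Fin k) ℚ)
    (hEq : (∏ i, (1 - MvPowerSeries.X i) ^ d i) * genFun f = (R : MvPowerSeries (Fin k) ℚ))
    (s : Fin k → ℕ) (hs : ∀ u ∈ R.support, ∀ i, u i ≤ s i) :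
    (f s : ℚ)
      = ∑ u ∈ R.support, R.coeff u * ∏ i, ((d i - 1 + (s i - u i)).choose (d i - 1) : ℚ) := by
  set B := ∏ i, (PowerSeries.invOneSubPow ℚ (d i)).val.subst (MvPowerSeries.X i :
    MvPowerSeries (Fin k) ℚ)
  have hG : genFun f = R * B := by
    rw [← hEq, mul_comm _ (genFun f), mul_assoc,
      MvPowerSeries.prod_one_sub_X_pow_mul_prod_subst_invOneSubPow, mul_one]
  change MvPowerSeries.coeff (expOf s) (genFun f) = _
  rw [hG, MvPowerSeries.coeff_coe_mul_of_support_le _ _ _ fun u hu i => hs u hu i]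
  simp only [B, MvPowerSeries.coeff_prod_subst_X]
  refine Finset.sum_congr rfl fun u _ => congrArg _ (Finset.prod_congr rfl fun i _ => ?_)
  rw [PowerSeries.invOneSubPow_val_eq_mk_sub_one_add_choose_of_pos _ _ (hd i),
    PowerSeries.coeff_mk]
  rfl

/-- **Lemma 1.2.** If `(1-Y₁)^{d₁}⋯(1-Y_k)^{d_k} · G_f = R` for a polynomial `R` of
degree at most `m̄`, then there is a polynomial `P` of degree at most
`(d₁-1,…,d_k-1)` with `f(s̄) = P(s̄)` for all `s̄ ≽ m̄`, whose coefficient at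
`Y₁^{d₁-1}⋯Y_k^{d_k-1}` equals `R(1,…,1)/((d₁-1)!⋯(d_k-1)!)`. -/
theorem statement6 {k : ℕ} (d : Fin k → ℕ) (hd : ∀ i, 1 ≤ d i) (f : (Fin k → ℕ) → ℕ)
    (R : MvPolynomial (Fin k) ℚ) (mbar : Fin k → ℕ) (hdeg : ∀ i, R.degreeOf i ≤ mbar i)
    (hEq : (∏ i, (1 - MvPowerSeries.X i) ^ d i) * genFun f = (R : MvPowerSeries (Fin k) ℚ)) :
    ∃ P : MvPolynomial (Fin k) ℚ, (∀ i, P.degreeOf i ≤ d i - 1) ∧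
      (∀ s : Fin k → ℕ, (∀ i, mbar i ≤ s i) →
        MvPolynomial.eval (fun i => (s i : ℚ)) P = f s) ∧
      MvPolynomial.coeff (expOf fun i => d i - 1) P
        = MvPolynomial.eval (fun _ => (1 : ℚ)) R / ∏ i, ((d i - 1).factorial : ℚ) := by
  refine ⟨R.chooseInterpolant fun i => d i - 1, R.degreeOf_chooseInterpolant_le _,
    fun s hs => ?_, R.coeff_chooseInterpolant_top _⟩
  have hsupp : ∀ u ∈ R.support, ∀ i, u i ≤ s i := fun u hu i =>
    (MvPolynomial.degreeOf_le_iff.mp (hdeg i) u hu).trans (hs i)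
  rw [R.eval_chooseInterpolant _ s hsupp, coeff_genFun_eq_sum_choose f d hd R hEq s hsupp]
end

section
/- If f : ℕ^k → ℕ is decreasing, then (1−Y₁)⋯(1−Y_k) · G_f(Ȳ) is a polynomial of degree at most m̄(f); equivalently, G_f is a rational function with numerator a polynomial of degree at most m̄(f) and denominator (1−Y₁)⋯(1−Y_k). -/
/-- `m̄(f)`: the coordinatewise least upper bound of the set `M(f)` of all points of
`ℕ^k` which, for some `n`, are `≼`-minimal subject to `f ≤ n`.  (Here `≼` is the
product order, which is the order of the pi type `Fin k → ℕ`.) -/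
noncomputable def mbarOf {k : ℕ} (f : (Fin k → ℕ) → ℕ) : Fin k → ℕ :=
  fun i => sSup {t : ℕ | ∃ r : Fin k → ℕ,
    (∃ n : ℕ, Minimal (fun u => f u ≤ n) r) ∧ r i = t}

/-!
Fix a coordinate `j` and a point `r` with `r_j > m̄_j`. A minimal point `m ≼ r` of
`S_{f(r)}(f)` has `m_j ≤ m̄_j < r_j`, so `m ≼ r - e_j` and `f(r - e_j) ≤ f(m) ≤ f(r)`; hence
`f` is constant in direction `j` beyond `m̄_j`, i.e. `(1 - Y_j) G_f` has no monomial of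
`Y_j`-degree above `m̄_j`. The remaining factors `1 - Y_i`, `i ≠ j`, do not involve `Y_j`, so
`(1 - Y₁)⋯(1 - Y_k) G_f` has no monomial outside the box `≼ m̄(f)`: it is a polynomial.
-/

open MvPowerSeries

namespace MvPowerSeries

variable {σ R : Type*}

section CommSemiring

variable [CommSemiring R]

theorem coeff_mul_eq_zero_of_add_lt {φ ψ : MvPowerSeries σ R} {j : σ} {m n : ℕ}
    (hφ : ∀ a : σ →₀ ℕ, m < a j → coeff a φ = 0) (hψ : ∀ b : σ →₀ ℕ, n < b j → coeff b ψ = 0)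
    {d : σ →₀ ℕ} (hd : m + n < d j) : coeff d (φ * ψ) = 0 := by
  classical
  rw [coeff_mul]
  refine Finset.sum_eq_zero fun p hp => ?_
  have hpj : p.1 j + p.2 j = d j := by
    rw [← Finset.HasAntidiagonal.mem_antidiagonal.mp hp, Finsupp.add_apply]
  rcases lt_or_ge m (p.1 j) with h | h
  · rw [hφ _ h, zero_mul]
  · rw [hψ _ (by omega), mul_zero]

variable [DecidableEq σ]

theorem eq_trunc'_of_coeff_eq_zero {φ : MvPowerSeries σ R} {n : σ →₀ ℕ}
    (h : ∀ d, ¬d ≤ n → coeff d φ = 0) : φ = trunc' R n φ := by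
  ext d
  rw [MvPolynomial.coeff_coe, coeff_trunc']
  split_ifs with hd
  · rfl
  · exact h d hd

theorem degreeOf_trunc'_le (n : σ →₀ ℕ) (φ : MvPowerSeries σ R) (i : σ) :
    (trunc' R n φ).degreeOf i ≤ n i := by
  refine MvPolynomial.degreeOf_le_iff.mpr fun d hd => ?_
  rw [MvPolynomial.mem_support_iff, coeff_trunc'] at hd
  split_ifs at hd with hdn
  · exact hdn i
  · exact absurd rfl hd

end CommSemiring

theorem coeff_prod_one_sub_X_eq_zero [CommRing R] {s : Finset σ} {j : σ} (hj : j ∉ s) {a : σ →₀ ℕ}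
    (ha : 0 < a j) : coeff a (∏ i ∈ s, (1 - X i : MvPowerSeries σ R)) = 0 := by
  classical
  refine Finset.prod_induction (fun i => (1 - X i : MvPowerSeries σ R))
    (fun φ => ∀ a : σ →₀ ℕ, 0 < a j → coeff a φ = 0)
    (fun φ ψ hφ hψ a ha => coeff_mul_eq_zero_of_add_lt hφ hψ (by omega)) ?_ ?_ a ha
  · intro a ha
    rw [coeff_one, if_neg]
    rintro rfl
    exact ha.ne rfl
  · intro i hi a ha
    have hij : i ≠ j := fun h => hj (h ▸ hi)
    rw [map_sub, coeff_one, coeff_X, if_neg, if_neg, sub_zero]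
    · rintro rfl
      simp [hij] at ha
    · rintro rfl
      exact ha.ne rfl

end MvPowerSeries

section Decreasing

variable {k : ℕ} (f : (Fin k → ℕ) → ℕ)

theorem finite_setOf_minimal_apply_le :
    {r : Fin k → ℕ | ∃ n, Minimal (fun u => f u ≤ n) r}.Finite := by
  refine ((Set.finite_Iic (f 0)).biUnion (t := fun n => {r | Minimal (fun u => f u ≤ n) r})
    fun n _ => WellQuasiOrderedLE.finite_of_isAntichain (setOfPred_minimal_antichain _)).subset ?_
  rintro r ⟨n, hr⟩
  refine Set.mem_biUnion (x := min n (f 0)) (Set.mem_Iic.mpr (min_le_right _ _)) ?_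
  rcases le_total n (f 0) with hn | hn
  · rwa [min_eq_left hn]
  · -- `0` already lies in `S_n(f)`, so it is its only minimal point
    have hr0 : r = 0 := le_antisymm (hr.2 hn fun _ => Nat.zero_le _) fun _ => Nat.zero_le _
    rw [min_eq_right hn, hr0]
    exact ⟨le_rfl, fun _ _ _ _ => Nat.zero_le _⟩

theorem le_mbarOf {r : Fin k → ℕ} {n : ℕ} (hr : Minimal (fun u => f u ≤ n) r) (i : Fin k) :
    r i ≤ mbarOf f i :=
  le_csSup ((finite_setOf_minimal_apply_le f).image fun r : Fin k → ℕ => r i).bddAbove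
    ⟨r, ⟨n, hr⟩, rfl⟩

variable {f}

theorem Antitone.apply_eq_of_mbarOf_le (hf : Antitone f) {r s : Fin k → ℕ} {j : Fin k}
    (hsr : s ≤ r) (hs : ∀ i ≠ j, s i = r i) (hj : mbarOf f j ≤ s j) : f s = f r := by
  obtain ⟨m, hmr, hm⟩ := exists_minimal_le_of_wellFoundedLT (fun u => f u ≤ f r) r le_rfl
  have hms : m ≤ s := fun i => by
    rcases eq_or_ne i j with rfl | hi
    · exact (le_mbarOf f hm i).trans hj
    · exact (hmr i).trans (hs i hi).ge
  exact le_antisymm ((hf hms).trans hm.prop) (hf hsr)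

theorem coeff_one_sub_X_mul_genFun_eq_zero (hf : Antitone f) {j : Fin k} {b : Fin k →₀ ℕ}
    (hb : mbarOf f j < b j) : coeff b ((1 - X j) * genFun f) = 0 := by
  classical
  have hjb : Finsupp.single j 1 ≤ b := Finsupp.single_le_iff.mpr (by omega)
  rw [sub_mul, one_mul, map_sub, X_def, coeff_monomial_mul, if_pos hjb, one_mul, sub_eq_zero]
  refine congrArg Nat.cast
    (hf.apply_eq_of_mbarOf_le (j := j) (fun i => ?_) (fun i hi => ?_) ?_).symm
  · exact tsub_le_self
  · simp [Finsupp.single_eq_of_ne hi]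
  · simp only [Finsupp.tsub_apply, Finsupp.single_eq_same]
    omega

theorem coeff_prod_one_sub_X_mul_genFun_eq_zero (hf : Antitone f) {j : Fin k}
    {d : Fin k →₀ ℕ} (hd : mbarOf f j < d j) :
    coeff d ((∏ i, (1 - X i)) * genFun f) = 0 := by
  classical
  rw [← Finset.mul_prod_erase _ _ (Finset.mem_univ j), mul_comm (1 - X j), mul_assoc]
  exact coeff_mul_eq_zero_of_add_lt (m := 0)
    (fun a ha => coeff_prod_one_sub_X_eq_zero (Finset.notMem_erase j _) ha)
    (fun b hb => coeff_one_sub_X_mul_genFun_eq_zero hf hb) (by omega)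

end Decreasing

/-- **Proposition 1.3.** If `f : ℕ^k → ℕ` is decreasing, then
`(1-Y₁)⋯(1-Y_k) · G_f` is (the power series of) a polynomial of degree at most
`m̄(f)`; i.e. `G_f` is rational with numerator of degree at most `m̄(f)` and
denominator `(1-Y₁)⋯(1-Y_k)`. -/
theorem statement7 {k : ℕ} (f : (Fin k → ℕ) → ℕ)
    (hf : ∀ r s : Fin k → ℕ, (∀ i, s i ≤ r i) → f r ≤ f s) :
    ∃ R : MvPolynomial (Fin k) ℚ, (∀ i, R.degreeOf i ≤ mbarOf f i) ∧
      (∏ i, (1 - MvPowerSeries.X i)) * genFun f = (R : MvPowerSeries (Fin k) ℚ) := by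
  have hanti : Antitone f := fun s r hsr => hf r s hsr
  let mbar : Fin k →₀ ℕ := Finsupp.equivFunOnFinite.symm (mbarOf f)
  refine ⟨trunc' ℚ mbar ((∏ i, (1 - X i)) * genFun f), degreeOf_trunc'_le mbar _,
    eq_trunc'_of_coeff_eq_zero fun d hd => ?_⟩
  obtain ⟨j, hj⟩ : ∃ j, mbar j < d j := by
    simpa [Finsupp.le_def] using hd
  exact coeff_prod_one_sub_X_mul_genFun_eq_zero hanti hj
end

section
/- Let I be an ideal of ℕ^m, i.e. a subset of ℕ^m that is downward closed under the product order ≼. For s̄ ∈ ℕ^k let H_I(s̄) := #{r̄ ∈ I : ‖r̄‖ = s̄}. Then there is a polynomial P ∈ ℚ[Y₁,…,Y_k] such that H_I(s̄) = P(s̄) for all s̄ ∈ ℕ^k with min(s₁,…,s_k) sufficiently large. -/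
/-! The complement of the ideal `I` is an upper set, hence (Dickson's lemma) the upper closure of
a finite set `G`. Inclusion–exclusion over the subsets `S ⊆ G` writes `H_I(s̄)` as an alternating
sum of the numbers of `r̄` with `‖r̄‖ = s̄` lying above the join `h` of `S`. Subtracting `h` turns
each of these into a product over the blocks of the numbers of compositions of `sᵢ - |hᵢ|` into
`dᵢ` parts, i.e. of `multichoose dᵢ (sᵢ - |hᵢ|)`, a polynomial in `sᵢ` once `sᵢ > |hᵢ|`. -/

open Finset Polynomial

theorem IsUpperSet.exists_finset_eq_upperClosure {α : Type*} [PartialOrder α]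
    [WellQuasiOrderedLE α] {U : Set α} (hU : IsUpperSet U) :
    ∃ G : Finset α, U = upperClosure (G : Set α) := by
  have hfin : {x | Minimal (· ∈ U) x}.Finite :=
    WellQuasiOrderedLE.finite_of_isAntichain (setOfPred_minimal_antichain _)
  refine ⟨hfin.toFinset, Set.ext fun r => ⟨fun hr => ?_, ?_⟩⟩
  · obtain ⟨g, hgr, hg⟩ := exists_minimal_le_of_wellFoundedLT (· ∈ U) r hr
    exact mem_upperClosure.2 ⟨g, hfin.mem_toFinset.2 hg, hgr⟩
  · rintro ⟨g, hg, hgr⟩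
    exact hU hgr (hfin.mem_toFinset.1 hg).prop

theorem Finset.card_filter_forall_not_le_eq_sum_powerset {α : Type*} [SemilatticeSup α]
    [OrderBot α] [DecidableLE α] (T G : Finset α) :
    (#{r ∈ T | ∀ g ∈ G, ¬g ≤ r} : ℤ) =
      ∑ S ∈ G.powerset, (-1 : ℤ) ^ #S * #{r ∈ T | S.sup id ≤ r} := by
  classical
  have hpoint (r : α) : (if ∀ g ∈ G, ¬g ≤ r then 1 else 0) =
      ∑ S ∈ G.powerset with S.sup id ≤ r, (-1 : ℤ) ^ #S := by
    have : {S ∈ G.powerset | S.sup id ≤ r} = {g ∈ G | g ≤ r}.powerset := by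
      ext S
      simp only [mem_filter, mem_powerset, Finset.sup_le_iff, id, subset_iff]
      grind
    rw [this, sum_powerset_neg_one_pow_card]
    simp [filter_eq_empty_iff]
  calc (#{r ∈ T | ∀ g ∈ G, ¬g ≤ r} : ℤ)
      = ∑ r ∈ T, ∑ S ∈ G.powerset, if S.sup id ≤ r then (-1 : ℤ) ^ #S else 0 := by
        simp_rw [card_filter, Nat.cast_sum, Nat.cast_ite, Nat.cast_one, Nat.cast_zero, hpoint,
          sum_filter]
    _ = _ := by
        rw [sum_comm]
        simp_rw [card_filter, Nat.cast_sum, mul_sum, Nat.cast_ite, Nat.cast_one, Nat.cast_zero,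
          mul_ite, mul_one, mul_zero]

namespace Finset.Nat

theorem card_antidiagonalTuple (d n : ℕ) : #(antidiagonalTuple d n) = d.multichoose n := by
  rw [← Fintype.card_coe, Fintype.card_congr <| (Sym.equivNatSumOfFintype (Fin d) n).trans
    (Equiv.subtypeEquivRight fun v => mem_antidiagonalTuple.symm) |>.symm,
    Sym.card_sym_eq_multichoose, Fintype.card_fin]

theorem card_filter_le_antidiagonalTuple {d n : ℕ} (a : Fin d → ℕ) (ha : ∑ i, a i ≤ n) :
    #{v ∈ antidiagonalTuple d n | ∀ i, a i ≤ v i} = d.multichoose (n - ∑ i, a i) := by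
  rw [← card_antidiagonalTuple]
  refine card_nbij' (· - a) (· + a) (fun v hv => ?_) (fun w hw => ?_) (fun v hv => ?_)
    (fun w _ => add_tsub_cancel_right w a)
  · simp only [coe_filter, mem_antidiagonalTuple, Set.mem_ofPred_eq, mem_coe] at hv ⊢
    rw [Pi.sub_def, sum_tsub_distrib _ fun i _ => hv.2 i, hv.1]
  · simp only [coe_filter, mem_antidiagonalTuple, Set.mem_ofPred_eq, mem_coe] at hw ⊢
    refine ⟨?_, fun i => le_add_self⟩
    rw [Pi.add_def, sum_add_distrib, hw]
    omega
  · exact tsub_add_cancel_of_le (mem_filter.1 hv).2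

end Finset.Nat

/-- `multichoose 0 n` is `1` at `n = 0` but `0` afterwards, hence the restriction to `0 < n`. -/
theorem Nat.exists_polynomial_eval_multichoose :
    ∀ d : ℕ, ∃ p : ℚ[X], ∀ n : ℕ, 0 < n → (d.multichoose n : ℚ) = p.eval (n : ℚ)
  | 0 => ⟨0, fun n hn => by
      obtain ⟨m, rfl⟩ := Nat.exists_eq_succ_of_ne_zero hn.ne'
      simp [Nat.multichoose_zero_succ]⟩
  | e + 1 => ⟨C (e.factorial : ℚ)⁻¹ * (ascPochhammer ℚ e).comp (X + 1), fun n _ => by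
      have h := Nat.ascFactorial_eq_factorial_mul_choose n e
      rw [← ascPochhammer_nat_eq_ascFactorial] at h
      rw [Nat.multichoose_eq, eval_mul, eval_C, eval_comp, eval_add, eval_X, eval_one,
        ← Nat.cast_succ, ← ascPochhammer_eval_cast, h, show e + 1 + n - 1 = n + e by omega,
        Nat.choose_symm_add]
      push_cast
      field_simp⟩

section BlockSumFiber

variable {ι : Type*} [Fintype ι] [DecidableEq ι] {d : ι → ℕ}

def blockSumFiber (d : ι → ℕ) (s : ι → ℕ) : Finset (∀ i, Fin (d i) → ℕ) :=
  Fintype.piFinset fun i => Nat.antidiagonalTuple (d i) (s i)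

theorem mem_blockSumFiber {s : ι → ℕ} {r : ∀ i, Fin (d i) → ℕ} :
    r ∈ blockSumFiber d s ↔ ∀ i, ∑ j, r i j = s i := by
  simp [blockSumFiber, Fintype.mem_piFinset, Nat.mem_antidiagonalTuple]

theorem card_filter_le_blockSumFiber (h : ∀ i, Fin (d i) → ℕ) (s : ι → ℕ)
    (hs : ∀ i, ∑ j, h i j ≤ s i) :
    #{r ∈ blockSumFiber d s | ∀ i j, h i j ≤ r i j} =
      ∏ i, (d i).multichoose (s i - ∑ j, h i j) := by
  have : {r ∈ blockSumFiber d s | ∀ i j, h i j ≤ r i j} = Fintype.piFinset fun i =>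
      {v ∈ Nat.antidiagonalTuple (d i) (s i) | ∀ j, h i j ≤ v j} := by
    ext r
    simp only [blockSumFiber, mem_filter, Fintype.mem_piFinset, forall_and]
  rw [this, Fintype.card_piFinset]
  exact prod_congr rfl fun i _ => Nat.card_filter_le_antidiagonalTuple (h i) (hs i)

theorem exists_mvPolynomial_card_filter_le_blockSumFiber (h : ∀ i, Fin (d i) → ℕ) :
    ∃ P : MvPolynomial ι ℚ, ∀ s : ι → ℕ, (∀ i, ∑ j, h i j < s i) →
      (#{r ∈ blockSumFiber d s | ∀ i j, h i j ≤ r i j} : ℚ) =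
        MvPolynomial.eval (fun i => (s i : ℚ)) P := by
  choose p hp using Nat.exists_polynomial_eval_multichoose
  refine ⟨∏ i, ((p (d i)).comp (X - C ((∑ j, h i j : ℕ) : ℚ))).toMvPolynomial i,
    fun s hs => ?_⟩
  rw [card_filter_le_blockSumFiber h s fun i => (hs i).le, Nat.cast_prod, map_prod]
  refine prod_congr rfl fun i _ => ?_
  rw [hp _ _ (Nat.sub_pos_of_lt (hs i)), MvPolynomial.eval_toMvPolynomial, eval_comp,
    Nat.cast_sub (hs i).le, eval_sub, eval_X, eval_C]

theorem natCard_mem_blockSumFiber_eq_sum_powerset {I : Set (∀ i, Fin (d i) → ℕ)}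
    {G : Finset (∀ i, Fin (d i) → ℕ)} (hG : Iᶜ = upperClosure (G : Set (∀ i, Fin (d i) → ℕ)))
    (s : ι → ℕ) :
    (Nat.card {r // r ∈ I ∧ ∀ i, ∑ j, r i j = s i} : ℚ) =
      ∑ S ∈ G.powerset,
        (-1) ^ #S * (#{r ∈ blockSumFiber d s | ∀ i j, S.sup id i j ≤ r i j} : ℚ) := by
  classical
  have hmem (r) : r ∈ I ↔ ∀ g ∈ G, ¬g ≤ r := by
    rw [← not_not (a := r ∈ I), ← Set.mem_compl_iff, hG]
    simp
  have hcount : Nat.card {r // r ∈ I ∧ ∀ i, ∑ j, r i j = s i} =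
      #{r ∈ blockSumFiber d s | ∀ g ∈ G, ¬g ≤ r} := by
    rw [← Nat.card_eq_finsetCard]
    exact Nat.card_congr <| Equiv.subtypeEquivRight fun r => by
      rw [mem_filter, mem_blockSumFiber, hmem, and_comm]
  rw [hcount, ← Int.cast_natCast, card_filter_forall_not_le_eq_sum_powerset]
  push_cast
  refine sum_congr rfl fun S _ => ?_
  rw [filter_congr fun r _ => Pi.le_def.trans <| forall_congr' fun i => Pi.le_def]

end BlockSumFiber

theorem statement14_general {k : ℕ} (d : Fin k → ℕ)
    (I : Set (∀ i : Fin k, Fin (d i) → ℕ))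
    (hI : ∀ r ∈ I, ∀ r' : ∀ i : Fin k, Fin (d i) → ℕ,
      (∀ i j, r' i j ≤ r i j) → r' ∈ I) :
    ∃ P : MvPolynomial (Fin k) ℚ, ∃ N : ℕ, ∀ s : Fin k → ℕ, (∀ i, N ≤ s i) →
      ((Nat.card {r : ∀ i : Fin k, Fin (d i) → ℕ //
          r ∈ I ∧ ∀ i, ∑ j, r i j = s i}) : ℚ)
        = MvPolynomial.eval (fun i => (s i : ℚ)) P := by
  obtain ⟨G, hG⟩ := IsUpperSet.exists_finset_eq_upperClosure (U := Iᶜ)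
    fun r r' hle hr hr' => hr (hI r' hr' r hle)
  choose P hP using fun S : Finset (∀ i, Fin (d i) → ℕ) =>
    exists_mvPolynomial_card_filter_le_blockSumFiber (S.sup id)
  set a := G.sup id
  refine ⟨∑ S ∈ G.powerset, (-1) ^ #S * P S, ∑ i, ∑ j, a i j + 1, fun s hs => ?_⟩
  have hS_lt (S) (hS : S ∈ G.powerset) (i) : ∑ j, S.sup id i j < s i := calc
    ∑ j, S.sup id i j ≤ ∑ j, a i j :=
      sum_le_sum fun j _ => Finset.sup_mono (f := id) (mem_powerset.1 hS) i j
    _ ≤ ∑ i, ∑ j, a i j := single_le_sum (f := fun i => ∑ j, a i j) (by simp) (mem_univ i)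
    _ < s i := Nat.lt_of_succ_le (hs i)
  rw [natCard_mem_blockSumFiber_eq_sum_powerset hG, map_sum]
  refine sum_congr rfl fun S hS => ?_
  rw [map_mul, ← hP S s (hS_lt S hS)]
  simp

/-- **Corollary 4.3.** Let `I` be an ideal of `ℕ^m` (a `≼`-downward closed set, with
coordinates indexed by pairs `(i, j)`, `i : Fin k`, `j : Fin (d i)`).  Then the
counting function `H_I(s̄) = #{r̄ ∈ I : ‖r̄‖ = s̄}` is eventually (for `min(s̄)`
large) given by a polynomial in `ℚ[Y₁,…,Y_k]`. -/
theorem statement14 {k : ℕ} (hk : 0 < k) (d : Fin k → ℕ) (hd : ∀ i, 0 < d i)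
    (I : Set (∀ i : Fin k, Fin (d i) → ℕ))
    (hI : ∀ r ∈ I, ∀ r' : ∀ i : Fin k, Fin (d i) → ℕ,
      (∀ i j, r' i j ≤ r i j) → r' ∈ I) :
    ∃ P : MvPolynomial (Fin k) ℚ, ∃ N : ℕ, ∀ s : Fin k → ℕ, (∀ i, N ≤ s i) →
      ((Nat.card {r : ∀ i : Fin k, Fin (d i) → ℕ //
          r ∈ I ∧ ∀ i, ∑ j, r i j = s i}) : ℚ)
        = MvPolynomial.eval (fun i => (s i : ℚ)) P :=
  statement14_general d I hI
end
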